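/- arXiv:2302.05208 — 2 statements merged into one kernel-verified Lean document; each statement's English description precedes it below -/
import Mathlib

section
/- Let μ be a probability measure on ℝ, let n ≥ 1, and let f₁, …, f_n, g₁, …, g_n : ℝ → ℝ be functions in L²(μ) such that both (1, f₁, …, f_n) and (1, g₁, …, g_n) form Chebyshev systems. Then the n×n matrix with entries Cov_μ(f_i, g_j) has nonnegative determinant: det(Cov_μ(f_i, g_j))_{1 ≤ i,j ≤ n} ≥ 0. -/
open MeasureTheory

/-- Covariance of two functions with respect to a measure. -/
noncomputable def cov {α : Type*} [MeasurableSpace α] (μ : Measure α) (f g : α → ℝ) : ℝ :=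
  ∫ x, (f x - ∫ y, f y ∂μ) * (g x - ∫ y, g y ∂μ) ∂μ

/-- An `r`-tuple of functions `(h₁, …, h_r)` forms a Chebyshev system if for all
`t₁ ≤ ⋯ ≤ t_r`, `det(h_i(t_j)) ≥ 0`. -/
def ChebyshevSystem {r : ℕ} (h : Fin r → ℝ → ℝ) : Prop :=
  ∀ t : Fin r → ℝ, Monotone t → 0 ≤ Matrix.det (Matrix.of fun i j => h i (t j))

open Equiv Matrix

lemma mul_integrable' {α : Type*} [MeasurableSpace α] {μ : Measure α}
    {a b : α → ℝ} (ha : MemLp a 2 μ) (hb : MemLp b 2 μ) :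
    Integrable (fun x => a x * b x) μ := by
  have : MemLp (a • b) 1 μ := hb.smul ha
  exact memLp_one_iff_integrable.mp this

lemma cov_eq' {α : Type*} [MeasurableSpace α] {μ : Measure α} [IsProbabilityMeasure μ]
    {a b : α → ℝ} (ha : MemLp a 2 μ) (hb : MemLp b 2 μ) :
    (∫ x, (a x - ∫ y, a y ∂μ) * (b x - ∫ y, b y ∂μ) ∂μ)
      = (∫ x, a x * b x ∂μ) - (∫ x, a x ∂μ) * (∫ x, b x ∂μ) := by
  have hab := mul_integrable' ha hb
  have ha1 := ha.integrable one_le_two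
  have hb1 := hb.integrable one_le_two
  set A := ∫ y, a y ∂μ
  set B := ∫ y, b y ∂μ
  have h1 : Integrable (fun x => a x * b x - B * a x) μ := hab.sub (ha1.const_mul B)
  have h2 : Integrable (fun x => A * b x - A * B) μ :=
    (hb1.const_mul A).sub (integrable_const _)
  have : ∀ x, (a x - A) * (b x - B) = (a x * b x - B * a x) - (A * b x - A * B) := by
    intro x; ring
  simp_rw [this]
  rw [integral_sub h1 h2, integral_sub hab (ha1.const_mul B),
    integral_sub (hb1.const_mul A) (integrable_const _),
    integral_const_mul, integral_const_mul, integral_const]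
  simp only [measure_univ, ENNReal.toReal_one, smul_eq_mul, one_mul, probReal_univ, mul_one]
  ring

lemma andreief_nonneg {α : Type*} [MeasurableSpace α] (μ : Measure α) [IsProbabilityMeasure μ]
    {N : ℕ} (H K : Fin N → α → ℝ)
    (hH : ∀ i, MemLp (H i) 2 μ) (hK : ∀ i, MemLp (K i) 2 μ)
    (hpos : ∀ x : Fin N → α,
      0 ≤ Matrix.det (Matrix.of fun i j => H i (x j)) * Matrix.det (Matrix.of fun i j => K i (x j))) :
    0 ≤ Matrix.det (Matrix.of fun i j => ∫ x, H i x * K j x ∂μ) := by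
  letI : MeasureSpace α := { volume := μ }
  haveI : IsProbabilityMeasure (volume : Measure α) := ‹_›
  -- basic integrability of coordinatewise products over the product measure
  have key : ∀ (σ τ : Perm (Fin N)),
      Integrable (fun x : Fin N → α => ∏ j, (H (σ j) (x j) * K (τ j) (x j)))
        (volume : Measure (Fin N → α)) := by
    intro σ τ
    exact Integrable.fintype_prod (f := fun j t => H (σ j) t * K (τ j) t)
      (fun j => mul_integrable' (hH (σ j)) (hK (τ j)))
  set P : (Fin N → α) → ℝ :=
    fun x => Matrix.det (Matrix.of fun i j => H i (x j)) * ∏ j, K j (x j) with hP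
  -- P is an integrable function
  have hPint : ∀ τ : Perm (Fin N),
      Integrable (fun x : Fin N → α =>
        Matrix.det (Matrix.of fun i j => H i (x j)) * ∏ j, K (τ j) (x j)) volume := by
    intro τ
    have : ∀ x : Fin N → α, Matrix.det (Matrix.of fun i j => H i (x j)) * ∏ j, K (τ j) (x j)
        = ∑ σ : Perm (Fin N), (Perm.sign σ : ℤ) * ∏ j, (H (σ j) (x j) * K (τ j) (x j)) := by
      intro x
      rw [Matrix.det_apply', Finset.sum_mul]
      refine Finset.sum_congr rfl fun σ _ => ?_
      rw [mul_assoc, Finset.prod_mul_distrib]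
      simp [Matrix.of_apply]
    simp_rw [this]
    exact integrable_finset_sum _ fun σ _ => ((key σ τ).const_mul _)
  -- Claim 1: the determinant equals ∫ P
  have claim1 : Matrix.det (Matrix.of fun i j => ∫ x, H i x * K j x ∂μ)
      = ∫ x : Fin N → α, P x := by
    rw [Matrix.det_apply']
    have : ∀ σ : Perm (Fin N), ((Perm.sign σ : ℤ) : ℝ) * ∏ j, (Matrix.of fun i j => ∫ x, H i x * K j x ∂μ) (σ j) j
        = ∫ x : Fin N → α, ((Perm.sign σ : ℤ) : ℝ) * ∏ j, (H (σ j) (x j) * K j (x j)) := by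
      intro σ
      rw [integral_const_mul]
      congr 1
      have := MeasureTheory.integral_fintype_prod_volume_eq_prod (𝕜 := ℝ) (ι := Fin N)
        (f := fun j t => H (σ j) t * K j t)
      rw [this]
      rfl
    simp_rw [this]
    rw [← integral_finset_sum]
    · congr 1; funext x
      simp only [hP]
      rw [Matrix.det_apply', Finset.sum_mul]
      refine Finset.sum_congr rfl fun σ _ => ?_
      rw [mul_assoc, Finset.prod_mul_distrib]
      simp [Matrix.of_apply]
    · exact fun σ _ => ((key σ 1).const_mul _)
  -- Claim 2: symmetrization identity
  have sign_sq : ∀ τ : Perm (Fin N), ((Perm.sign τ : ℤ) : ℝ) * ((Perm.sign τ : ℤ) : ℝ) = 1 := by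
    intro τ
    rcases Int.units_eq_one_or (Perm.sign τ) with h | h <;> rw [h] <;> norm_num
  have perm_int : ∀ τ : Perm (Fin N),
      (∫ x : Fin N → α, Matrix.det (Matrix.of fun i j => H i (x j)) * ∏ j, K (τ j) (x j))
        = ((Perm.sign τ : ℤ) : ℝ) * ∫ x, P x := by
    intro τ
    have hmp : MeasurePreserving (MeasurableEquiv.piCongrLeft (fun _ : Fin N => α) (τ.symm : Fin N ≃ Fin N))
        (volume : Measure (Fin N → α)) volume :=
      volume_measurePreserving_piCongrLeft (fun _ : Fin N => α) (τ.symm : Fin N ≃ Fin N)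
    set T := MeasurableEquiv.piCongrLeft (fun _ : Fin N => α) (τ.symm : Fin N ≃ Fin N) with hT
    have hTapp : ∀ (x : Fin N → α) (j : Fin N), T x j = x (τ j) := by
      intro x j
      conv_lhs => rw [← Equiv.symm_apply_apply τ j]
      exact MeasurableEquiv.piCongrLeft_apply_apply (β := fun _ : Fin N => α) (τ.symm : Fin N ≃ Fin N) x (τ j)
    have := hmp.integral_comp' (fun x : Fin N → α =>
      Matrix.det (Matrix.of fun i j => H i (x j)) * ∏ j, K (τ j) (x j))
    rw [← this]
    have : ∀ x : Fin N → α,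
        Matrix.det (Matrix.of fun i j => H i (T x j)) * ∏ j, K (τ j) (T x j)
          = ((Perm.sign τ : ℤ) : ℝ) * P x := by
      intro x
      have h1 : (Matrix.of fun i j => H i (T x j))
          = (Matrix.of fun i j => H i (x j)).submatrix id τ := by
        ext i j; simp [hTapp]
      have h2 : (∏ j, K (τ j) (T x j)) = ∏ j, K j (x j) := by
        have := Equiv.prod_comp (τ : Fin N ≃ Fin N) (fun j => K j (x j))
        simp_rw [hTapp]
        exact this
      rw [h1, h2, Matrix.det_permute']
      push_cast
      simp only [hP]
      ring
    simp_rw [this]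
    rw [integral_const_mul]
  have claim2 : (∫ x : Fin N → α,
      Matrix.det (Matrix.of fun i j => H i (x j)) * Matrix.det (Matrix.of fun i j => K i (x j)))
      = (Fintype.card (Perm (Fin N)) : ℝ) * ∫ x, P x := by
    have expand : ∀ x : Fin N → α,
        Matrix.det (Matrix.of fun i j => H i (x j)) * Matrix.det (Matrix.of fun i j => K i (x j))
        = ∑ τ : Perm (Fin N), ((Perm.sign τ : ℤ) : ℝ) *
            (Matrix.det (Matrix.of fun i j => H i (x j)) * ∏ j, K (τ j) (x j)) := by
      intro x
      rw [Matrix.det_apply' (M := Matrix.of fun i j => K i (x j)), Finset.mul_sum]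
      refine Finset.sum_congr rfl fun τ _ => ?_
      simp only [Matrix.of_apply]
      ring
    simp_rw [expand]
    rw [integral_finset_sum _ (fun τ _ => (hPint τ).const_mul _)]
    simp_rw [integral_const_mul, perm_int]
    have hone : ∀ τ : Perm (Fin N),
        ((Perm.sign τ : ℤ) : ℝ) * (((Perm.sign τ : ℤ) : ℝ) * ∫ x : Fin N → α, P x)
          = ∫ x : Fin N → α, P x := fun τ => by rw [← mul_assoc, sign_sq τ, one_mul]
    simp_rw [hone]
    rw [Finset.sum_const, Finset.card_univ, nsmul_eq_mul]
  have hD : 0 ≤ ∫ x : Fin N → α,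
      Matrix.det (Matrix.of fun i j => H i (x j)) * Matrix.det (Matrix.of fun i j => K i (x j)) :=
    integral_nonneg fun x => hpos x
  rw [claim2] at hD
  rw [claim1]
  have hcard : (0 : ℝ) < (Fintype.card (Perm (Fin N)) : ℝ) := by
    exact_mod_cast Fintype.card_pos
  nlinarith

def chebAuxEquiv (n : ℕ) : Unit ⊕ Fin n ≃ Fin (n + 1) where
  toFun := Sum.elim (fun _ => 0) Fin.succ
  invFun := fun i => Fin.cases (Sum.inl ()) (fun j => Sum.inr j) i
  left_inv := by rintro (⟨⟩ | i) <;> simp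
  right_inv := fun i => by induction i using Fin.cases <;> simp

/-- Theorem 4.2: if `(1, f₁, …, f_n)` and `(1, g₁, …, g_n)` form Chebyshev systems
with all `f_i, g_i ∈ L²(μ)`, then `det(Cov_μ(f_i, g_j)) ≥ 0`. -/
theorem det_cov_nonneg_of_chebyshev (μ : Measure ℝ) [IsProbabilityMeasure μ]
    (n : ℕ) (hn : 1 ≤ n) (f g : Fin n → ℝ → ℝ)
    (hfL2 : ∀ i, MemLp (f i) 2 μ) (hgL2 : ∀ i, MemLp (g i) 2 μ)
    (hf : ChebyshevSystem (Fin.cons (fun _ => (1 : ℝ)) f))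
    (hg : ChebyshevSystem (Fin.cons (fun _ => (1 : ℝ)) g)) :
    0 ≤ Matrix.det (Matrix.of fun i j => cov μ (f i) (g j)) := by
  classical
  set H : Fin (n + 1) → ℝ → ℝ := Fin.cons (fun _ => (1 : ℝ)) f with hH
  set K : Fin (n + 1) → ℝ → ℝ := Fin.cons (fun _ => (1 : ℝ)) g with hK
  have hHL2 : ∀ i, MemLp (H i) 2 μ := by
    intro i
    induction i using Fin.cases with
    | zero => simpa [hH] using memLp_const (μ := μ) (1 : ℝ)
    | succ i => simpa [hH] using hfL2 i
  have hKL2 : ∀ i, MemLp (K i) 2 μ := by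
    intro i
    induction i using Fin.cases with
    | zero => simpa [hK] using memLp_const (μ := μ) (1 : ℝ)
    | succ i => simpa [hK] using hgL2 i
  have hpos : ∀ x : Fin (n + 1) → ℝ,
      0 ≤ Matrix.det (Matrix.of fun i j => H i (x j)) *
          Matrix.det (Matrix.of fun i j => K i (x j)) := by
    intro x
    set σ := Tuple.sort x with hσ
    have hmono : Monotone (x ∘ σ) := Tuple.monotone_sort x
    have hA := hf (x ∘ σ) hmono
    have hB := hg (x ∘ σ) hmono
    have eA : (Matrix.of fun i j => H i ((x ∘ σ) j))
        = (Matrix.of fun i j => H i (x j)).submatrix id σ := rfl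
    have eB : (Matrix.of fun i j => K i ((x ∘ σ) j))
        = (Matrix.of fun i j => K i (x j)).submatrix id σ := rfl
    rw [eA, Matrix.det_permute'] at hA
    rw [eB, Matrix.det_permute'] at hB
    rcases Int.units_eq_one_or (Equiv.Perm.sign σ) with h | h <;>
      rw [h] at hA hB <;> push_cast at hA hB <;> nlinarith [hA, hB]
  have main := andreief_nonneg μ H K hHL2 hKL2 hpos
  -- reduce the (n+1)×(n+1) determinant to the covariance determinant
  set M : Matrix (Fin (n + 1)) (Fin (n + 1)) ℝ :=
    Matrix.of fun i j => ∫ x, H i x * K j x ∂μ with hM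
  set B : Matrix Unit (Fin n) ℝ := Matrix.of fun _ j => ∫ x, g j x ∂μ with hB
  set C : Matrix (Fin n) Unit ℝ := Matrix.of fun i _ => ∫ x, f i x ∂μ with hC
  set D : Matrix (Fin n) (Fin n) ℝ := Matrix.of fun i j => ∫ x, f i x * g j x ∂μ with hD
  have hsub : M.submatrix (chebAuxEquiv n) (chebAuxEquiv n) = Matrix.fromBlocks 1 B C D := by
    ext i j
    rcases i with u | i <;> rcases j with v | j <;>
      simp [hM, hB, hC, hD, chebAuxEquiv, Matrix.submatrix_apply, hH, hK,
        Matrix.one_apply, measure_univ]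
  have hdet : M.det = (D - C * B).det := by
    rw [← Matrix.det_submatrix_equiv_self (chebAuxEquiv n) M, hsub,
      Matrix.det_fromBlocks_one₁₁]
  have hcov : (Matrix.of fun i j => cov μ (f i) (g j)) = D - C * B := by
    ext i j
    have := cov_eq' (hfL2 i) (hgL2 j)
    simp only [Matrix.of_apply, Matrix.sub_apply, Matrix.mul_apply, hD, hC, hB,
      Finset.univ_unique, Finset.sum_singleton]
    rw [show cov μ (f i) (g j) = ∫ x, (f i x - ∫ y, f i y ∂μ) * (g j x - ∫ y, g j y ∂μ) ∂μ from rfl,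
      this]
  rw [hcov, ← hdet]
  exact main
end

section
/- Let μ = μ₁ ⊗ ⋯ ⊗ μ_d be a product probability measure on ℝ^d, let f, g ∈ L²(μ), and let X and X′ be independent random vectors each with law μ. Then Cov_μ(f, g) = (1/2) Σ_{i=1}^d E[Δ_i f(X, X′) · Δ̃_i g(X, X′)], where Δ_i f(X, X′) = f(X₁, …, X_i, …, X_d) − f(X₁, …, X_{i−1}, X′_i, X_{i+1}, …, X_d) and Δ̃_i g(X, X′) = g(X₁, …, X_i, X′_{i+1}, …, X′_d) − g(X₁, …, X_{i−1}, X′_i, X′_{i+1}, …, X′_d). -/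
open MeasureTheory
open scoped ENNReal

section Aux

open Function

variable {d : ℕ}

/-- Hölder: product of two L² functions is integrable. -/
private lemma memL2_integrable_mul {α : Type*} [MeasurableSpace α] {ν : Measure α}
    {u v : α → ℝ} (hu : MemLp u 2 ν) (hv : MemLp v 2 ν) :
    Integrable (fun x => u x * v x) ν := by
  have h : (1 : ℝ≥0∞) / 1 = 1 / 2 + 1 / 2 := by
    rw [ENNReal.div_add_div_same, one_add_one_eq_two,
      ENNReal.div_self two_ne_zero ENNReal.ofNat_ne_top, one_div_one]
  have := hv.smul (r := 1) hu (hpqr := ⟨by simpa [one_div] using h.symm⟩)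
  exact memLp_one_iff_integrable.mp (by simpa [smul_eq_mul, mul_comm, Pi.mul_def] using this)

/-- The coordinate-swapping function on `Fin d ⊕ Fin d`. -/
private def swapFun (c : Fin d → Prop) [DecidablePred c] : Fin d ⊕ Fin d → Fin d ⊕ Fin d :=
  Sum.elim (fun j => if c j then .inr j else .inl j) (fun j => if c j then .inl j else .inr j)

private lemma swapFun_involutive (c : Fin d → Prop) [DecidablePred c] :
    Function.Involutive (swapFun c) := by
  rintro (j | j) <;> by_cases h : c j <;> simp [swapFun, h]

private def swapPerm (c : Fin d → Prop) [DecidablePred c] : Equiv.Perm (Fin d ⊕ Fin d) :=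
  ⟨swapFun c, swapFun c, (swapFun_involutive c).leftInverse, (swapFun_involutive c).rightInverse⟩

variable (μi : Fin d → Measure ℝ) [∀ i, IsProbabilityMeasure (μi i)]

private def nuM : Fin d ⊕ Fin d → Measure ℝ := Sum.elim μi μi

private instance : ∀ i, IsProbabilityMeasure (nuM μi i) := by
  rintro (i | i) <;> (dsimp [nuM]; infer_instance)

private lemma nuM_swap (c : Fin d → Prop) [DecidablePred c] (x : Fin d ⊕ Fin d) :
    nuM μi (swapFun c x) = nuM μi x := by
  rcases x with j | j <;> by_cases h : c j <;> simp [nuM, swapFun, h]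

private def eE : ((Fin d ⊕ Fin d) → ℝ) ≃ᵐ ((Fin d → ℝ) × (Fin d → ℝ)) :=
  MeasurableEquiv.sumPiEquivProdPi (fun _ => ℝ)

private lemma mp_esymm :
    MeasurePreserving (⇑(eE (d := d)).symm)
      ((Measure.pi μi).prod (Measure.pi μi)) (Measure.pi (nuM μi)) :=
  measurePreserving_sumPiEquivProdPi_symm (nuM μi)

private lemma mp_e :
    MeasurePreserving (⇑(eE (d := d)))
      (Measure.pi (nuM μi)) ((Measure.pi μi).prod (Measure.pi μi)) := by
  have h := (mp_esymm μi).symm (eE (d := d)).symm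
  simpa using h

private lemma piCongrLeft_swap_eq (c : Fin d → Prop) [DecidablePred c] :
    ⇑(MeasurableEquiv.piCongrLeft (fun _ => ℝ) (swapPerm c)) =
      fun q : (Fin d ⊕ Fin d) → ℝ => q ∘ swapFun c := by
  funext q
  funext i
  conv_lhs => rw [show i = swapPerm c (swapPerm c i) from (swapFun_involutive c i).symm]
  exact MeasurableEquiv.piCongrLeft_apply_apply (β := fun _ : Fin d ⊕ Fin d => ℝ) (swapPerm c) q _

private lemma mp_comp (c : Fin d → Prop) [DecidablePred c] :
    MeasurePreserving (fun q : (Fin d ⊕ Fin d) → ℝ => q ∘ swapFun c)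
      (Measure.pi (nuM μi)) (Measure.pi (nuM μi)) := by
  have h := measurePreserving_piCongrLeft (α := fun _ : Fin d ⊕ Fin d => ℝ) (nuM μi) (swapPerm c)
  have h1 : (Measure.pi fun i => nuM μi (swapPerm c i)) = Measure.pi (nuM μi) := by
    congr 1
    funext i
    exact nuM_swap μi c i
  rw [h1, piCongrLeft_swap_eq] at h
  exact h

/-- The selection/swap map on the product space. -/
private lemma mp_select (c : Fin d → Prop) [DecidablePred c] :
    MeasurePreserving
      (fun p : (Fin d → ℝ) × (Fin d → ℝ) =>
        ((fun j => if c j then p.2 j else p.1 j, fun j => if c j then p.1 j else p.2 j) :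
          (Fin d → ℝ) × (Fin d → ℝ)))
      ((Measure.pi μi).prod (Measure.pi μi)) ((Measure.pi μi).prod (Measure.pi μi)) := by
  have h := (mp_e μi).comp ((mp_comp μi c).comp (mp_esymm μi))
  have heq : (⇑(eE (d := d)) ∘ (fun q : (Fin d ⊕ Fin d) → ℝ => q ∘ swapFun c) ∘
      ⇑(eE (d := d)).symm) =
      fun p : (Fin d → ℝ) × (Fin d → ℝ) =>
        ((fun j => if c j then p.2 j else p.1 j, fun j => if c j then p.1 j else p.2 j) :
          (Fin d → ℝ) × (Fin d → ℝ)) := by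
    funext p
    refine Prod.ext ?_ ?_ <;> · funext j
                                by_cases h : c j <;>
                                  simp [eE, MeasurableEquiv.coe_sumPiEquivProdPi,
                                    MeasurableEquiv.coe_sumPiEquivProdPi_symm,
                                    Equiv.sumPiEquivProdPi, swapFun, h]
  rwa [heq] at h
end Aux

/-- Lemma 6.1 (duplication formula): for a product probability measure
`μ = μ₁ ⊗ ⋯ ⊗ μ_d` on `ℝ^d`, `f, g ∈ L²(μ)`, and `X, X'` independent of law `μ`,
`Cov_μ(f,g) = (1/2) Σ_i E[Δ_i f(X,X') · Δ̃_i g(X,X')]`, where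
`Δ_i f(X,X') = f(X) − f(X₁,…,X'_i,…,X_d)` and
`Δ̃_i g(X,X') = g(X₁,…,X_i,X'_{i+1},…,X'_d) − g(X₁,…,X_{i−1},X'_i,X'_{i+1},…,X'_d)`. -/
theorem cov_duplication (d : ℕ) (μi : Fin d → Measure ℝ)
    [∀ i, IsProbabilityMeasure (μi i)]
    (f g : (Fin d → ℝ) → ℝ)
    (hfL2 : MemLp f 2 (Measure.pi μi)) (hgL2 : MemLp g 2 (Measure.pi μi)) :
    cov (Measure.pi μi) f g =
      (1 / 2) * ∑ i : Fin d,
        ∫ p : (Fin d → ℝ) × (Fin d → ℝ),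
          (f p.1 - f (Function.update p.1 i (p.2 i))) *
          (g (fun j => if j ≤ i then p.1 j else p.2 j) -
           g (fun j => if j < i then p.1 j else p.2 j))
        ∂((Measure.pi μi).prod (Measure.pi μi)) := by
  classical
  have mpFst : MeasurePreserving (Prod.fst : ((Fin d → ℝ) × (Fin d → ℝ)) → (Fin d → ℝ))
      ((Measure.pi μi).prod (Measure.pi μi)) (Measure.pi μi) :=
    ⟨measurable_fst, by
      simpa [Measure.fst] using
        (Measure.fst_prod : ((Measure.pi μi).prod (Measure.pi μi)).fst = Measure.pi μi)⟩
  have mpSnd : MeasurePreserving (Prod.snd : ((Fin d → ℝ) × (Fin d → ℝ)) → (Fin d → ℝ))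
      ((Measure.pi μi).prod (Measure.pi μi)) (Measure.pi μi) :=
    ⟨measurable_snd, by
      simpa [Measure.snd] using
        (Measure.snd_prod : ((Measure.pi μi).prod (Measure.pi μi)).snd = Measure.pi μi)⟩
  -- measure preserving coordinate maps
  have mpA : ∀ i : Fin d, MeasurePreserving
      (fun p : (Fin d → ℝ) × (Fin d → ℝ) => Function.update p.1 i (p.2 i))
      ((Measure.pi μi).prod (Measure.pi μi)) (Measure.pi μi) := by
    intro i
    have h := mpFst.comp (mp_select μi (fun j => j = i))
    have he : ((Prod.fst : ((Fin d → ℝ) × (Fin d → ℝ)) → (Fin d → ℝ)) ∘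
        (fun p : (Fin d → ℝ) × (Fin d → ℝ) =>
          ((fun j => if j = i then p.2 j else p.1 j, fun j => if j = i then p.1 j else p.2 j) :
            (Fin d → ℝ) × (Fin d → ℝ))))
        = fun p : (Fin d → ℝ) × (Fin d → ℝ) => Function.update p.1 i (p.2 i) := by
      funext p
      funext j
      by_cases hj : j = i
      · subst hj; simp
      · simp [Function.update_apply, hj]
    rwa [he] at h
  have mpB : ∀ i : Fin d, MeasurePreserving
      (fun p : (Fin d → ℝ) × (Fin d → ℝ) => (fun j => if j ≤ i then p.1 j else p.2 j : Fin d → ℝ))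
      ((Measure.pi μi).prod (Measure.pi μi)) (Measure.pi μi) := by
    intro i
    have h := mpFst.comp (mp_select μi (fun j => ¬ j ≤ i))
    have he : ((Prod.fst : ((Fin d → ℝ) × (Fin d → ℝ)) → (Fin d → ℝ)) ∘
        (fun p : (Fin d → ℝ) × (Fin d → ℝ) =>
          ((fun j => if ¬ j ≤ i then p.2 j else p.1 j,
            fun j => if ¬ j ≤ i then p.1 j else p.2 j) : (Fin d → ℝ) × (Fin d → ℝ))))
        = fun p : (Fin d → ℝ) × (Fin d → ℝ) =>
            (fun j => if j ≤ i then p.1 j else p.2 j : Fin d → ℝ) := by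
      funext p
      funext j
      by_cases hj : j ≤ i <;> simp [hj]
    rwa [he] at h
  have mpC : ∀ i : Fin d, MeasurePreserving
      (fun p : (Fin d → ℝ) × (Fin d → ℝ) => (fun j => if j < i then p.1 j else p.2 j : Fin d → ℝ))
      ((Measure.pi μi).prod (Measure.pi μi)) (Measure.pi μi) := by
    intro i
    have h := mpFst.comp (mp_select μi (fun j => ¬ j < i))
    have he : ((Prod.fst : ((Fin d → ℝ) × (Fin d → ℝ)) → (Fin d → ℝ)) ∘
        (fun p : (Fin d → ℝ) × (Fin d → ℝ) =>
          ((fun j => if ¬ j < i then p.2 j else p.1 j,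
            fun j => if ¬ j < i then p.1 j else p.2 j) : (Fin d → ℝ) × (Fin d → ℝ))))
        = fun p : (Fin d → ℝ) × (Fin d → ℝ) =>
            (fun j => if j < i then p.1 j else p.2 j : Fin d → ℝ) := by
      funext p
      funext j
      by_cases hj : j < i <;> simp [hj]
    rwa [he] at h
  -- L² memberships on the product space
  have hfF : MemLp (fun p : (Fin d → ℝ) × (Fin d → ℝ) => f p.1) 2
      ((Measure.pi μi).prod (Measure.pi μi)) := hfL2.comp_measurePreserving mpFst
  have hgF : MemLp (fun p : (Fin d → ℝ) × (Fin d → ℝ) => g p.1) 2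
      ((Measure.pi μi).prod (Measure.pi μi)) := hgL2.comp_measurePreserving mpFst
  have hgS : MemLp (fun p : (Fin d → ℝ) × (Fin d → ℝ) => g p.2) 2
      ((Measure.pi μi).prod (Measure.pi μi)) := hgL2.comp_measurePreserving mpSnd
  have hfA : ∀ i : Fin d, MemLp
      (fun p : (Fin d → ℝ) × (Fin d → ℝ) => f (Function.update p.1 i (p.2 i))) 2
      ((Measure.pi μi).prod (Measure.pi μi)) :=
    fun i => hfL2.comp_measurePreserving (mpA i)
  have hG : ∀ i : Fin d, MemLp
      (fun p : (Fin d → ℝ) × (Fin d → ℝ) =>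
        (g (fun j => if j ≤ i then p.1 j else p.2 j) -
         g (fun j => if j < i then p.1 j else p.2 j))) 2
      ((Measure.pi μi).prod (Measure.pi μi)) :=
    fun i => (hgL2.comp_measurePreserving (mpB i)).sub (hgL2.comp_measurePreserving (mpC i))
  have hIntfG : ∀ i : Fin d, Integrable
      (fun p : (Fin d → ℝ) × (Fin d → ℝ) => f p.1 *
        (g (fun j => if j ≤ i then p.1 j else p.2 j) -
         g (fun j => if j < i then p.1 j else p.2 j)))
      ((Measure.pi μi).prod (Measure.pi μi)) :=
    fun i => memL2_integrable_mul hfF (hG i)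
  have hIntAG : ∀ i : Fin d, Integrable
      (fun p : (Fin d → ℝ) × (Fin d → ℝ) => f (Function.update p.1 i (p.2 i)) *
        (g (fun j => if j ≤ i then p.1 j else p.2 j) -
         g (fun j => if j < i then p.1 j else p.2 j)))
      ((Measure.pi μi).prod (Measure.pi μi)) :=
    fun i => memL2_integrable_mul (hfA i) (hG i)
  -- Step 2: the key per-coordinate identity
  have key : ∀ i : Fin d,
      (∫ p : (Fin d → ℝ) × (Fin d → ℝ),
        (f p.1 - f (Function.update p.1 i (p.2 i))) *
        (g (fun j => if j ≤ i then p.1 j else p.2 j) -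
         g (fun j => if j < i then p.1 j else p.2 j))
        ∂((Measure.pi μi).prod (Measure.pi μi)))
      = 2 * ∫ p : (Fin d → ℝ) × (Fin d → ℝ), f p.1 *
        (g (fun j => if j ≤ i then p.1 j else p.2 j) -
         g (fun j => if j < i then p.1 j else p.2 j))
        ∂((Measure.pi μi).prod (Measure.pi μi)) := by
    intro i
    have hsel := mp_select μi (fun j => j = i)
    set T : ((Fin d → ℝ) × (Fin d → ℝ)) → ((Fin d → ℝ) × (Fin d → ℝ)) :=
      fun p => (fun j => if j = i then p.2 j else p.1 j,
                fun j => if j = i then p.1 j else p.2 j) with hT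
    have hTmeas : Measurable T := hsel.measurable
    have hTmap : Measure.map T ((Measure.pi μi).prod (Measure.pi μi)) =
        (Measure.pi μi).prod (Measure.pi μi) := hsel.map_eq
    have h1 : ∀ p : (Fin d → ℝ) × (Fin d → ℝ),
        (fun j => if j = i then p.2 j else p.1 j) = Function.update p.1 i (p.2 i) := by
      intro p
      funext j
      by_cases hj : j = i
      · subst hj; simp
      · simp [Function.update_apply, hj]
    have h2 : ∀ p : (Fin d → ℝ) × (Fin d → ℝ),
        (fun j => if j ≤ i then (if j = i then p.2 j else p.1 j)
                  else (if j = i then p.1 j else p.2 j)) =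
        (fun j => if j < i then p.1 j else p.2 j) := by
      intro p
      funext j
      rcases lt_trichotomy j i with hj | hj | hj
      · simp [hj, hj.le, hj.ne]
      · subst hj; simp
      · simp [hj.ne', hj.not_ge, lt_asymm hj]
    have h3 : ∀ p : (Fin d → ℝ) × (Fin d → ℝ),
        (fun j => if j < i then (if j = i then p.2 j else p.1 j)
                  else (if j = i then p.1 j else p.2 j)) =
        (fun j => if j ≤ i then p.1 j else p.2 j) := by
      intro p
      funext j
      rcases lt_trichotomy j i with hj | hj | hj
      · simp [hj, hj.le, hj.ne]
      · subst hj; simp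
      · simp [hj.ne', hj.not_ge, lt_asymm hj]
    have hcomp : ∫ p : (Fin d → ℝ) × (Fin d → ℝ),
        (f (T p).1 *
          (g (fun j => if j ≤ i then (T p).1 j else (T p).2 j) -
           g (fun j => if j < i then (T p).1 j else (T p).2 j)))
        ∂((Measure.pi μi).prod (Measure.pi μi))
        = ∫ p : (Fin d → ℝ) × (Fin d → ℝ), f p.1 *
          (g (fun j => if j ≤ i then p.1 j else p.2 j) -
           g (fun j => if j < i then p.1 j else p.2 j))
          ∂((Measure.pi μi).prod (Measure.pi μi)) := by
      have hmeasF : AEStronglyMeasurable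
          (fun p : (Fin d → ℝ) × (Fin d → ℝ) => f p.1 *
            (g (fun j => if j ≤ i then p.1 j else p.2 j) -
             g (fun j => if j < i then p.1 j else p.2 j)))
          (Measure.map T ((Measure.pi μi).prod (Measure.pi μi))) := by
        rw [hTmap]; exact (hIntfG i).aestronglyMeasurable
      have := integral_map hTmeas.aemeasurable hmeasF
      rw [hTmap] at this
      exact this.symm
    have hswap : ∫ p : (Fin d → ℝ) × (Fin d → ℝ),
        f (Function.update p.1 i (p.2 i)) *
        (g (fun j => if j ≤ i then p.1 j else p.2 j) -
         g (fun j => if j < i then p.1 j else p.2 j))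
        ∂((Measure.pi μi).prod (Measure.pi μi))
        = - ∫ p : (Fin d → ℝ) × (Fin d → ℝ), f p.1 *
          (g (fun j => if j ≤ i then p.1 j else p.2 j) -
           g (fun j => if j < i then p.1 j else p.2 j))
          ∂((Measure.pi μi).prod (Measure.pi μi)) := by
      rw [← hcomp, ← integral_neg]
      refine integral_congr_ae (Filter.Eventually.of_forall fun p => ?_)
      simp only [hT]; simp only [h1, h2, h3]
      ring
    calc
      (∫ p : (Fin d → ℝ) × (Fin d → ℝ),
          (f p.1 - f (Function.update p.1 i (p.2 i))) *
          (g (fun j => if j ≤ i then p.1 j else p.2 j) -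
           g (fun j => if j < i then p.1 j else p.2 j))
          ∂((Measure.pi μi).prod (Measure.pi μi)))
        = ∫ p : (Fin d → ℝ) × (Fin d → ℝ),
            (f p.1 *
              (g (fun j => if j ≤ i then p.1 j else p.2 j) -
               g (fun j => if j < i then p.1 j else p.2 j)) -
             f (Function.update p.1 i (p.2 i)) *
              (g (fun j => if j ≤ i then p.1 j else p.2 j) -
               g (fun j => if j < i then p.1 j else p.2 j)))
            ∂((Measure.pi μi).prod (Measure.pi μi)) := by
          refine integral_congr_ae (Filter.Eventually.of_forall fun p => ?_)
          ring
      _ = (∫ p : (Fin d → ℝ) × (Fin d → ℝ), f p.1 *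
            (g (fun j => if j ≤ i then p.1 j else p.2 j) -
             g (fun j => if j < i then p.1 j else p.2 j))
            ∂((Measure.pi μi).prod (Measure.pi μi)))
          - ∫ p : (Fin d → ℝ) × (Fin d → ℝ), f (Function.update p.1 i (p.2 i)) *
            (g (fun j => if j ≤ i then p.1 j else p.2 j) -
             g (fun j => if j < i then p.1 j else p.2 j))
            ∂((Measure.pi μi).prod (Measure.pi μi)) := integral_sub (hIntfG i) (hIntAG i)
      _ = 2 * ∫ p : (Fin d → ℝ) × (Fin d → ℝ), f p.1 *
            (g (fun j => if j ≤ i then p.1 j else p.2 j) -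
             g (fun j => if j < i then p.1 j else p.2 j))
            ∂((Measure.pi μi).prod (Measure.pi μi)) := by
          rw [hswap]; ring
  -- Step 3: telescoping sum
  have hsum : (∑ i : Fin d, ∫ p : (Fin d → ℝ) × (Fin d → ℝ), f p.1 *
        (g (fun j => if j ≤ i then p.1 j else p.2 j) -
         g (fun j => if j < i then p.1 j else p.2 j))
        ∂((Measure.pi μi).prod (Measure.pi μi)))
      = ∫ p : (Fin d → ℝ) × (Fin d → ℝ), f p.1 * (g p.1 - g p.2)
        ∂((Measure.pi μi).prod (Measure.pi μi)) := by
    rw [← integral_finset_sum _ (fun i _ => hIntfG i)]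
    refine integral_congr_ae (Filter.Eventually.of_forall fun p => ?_)
    dsimp only
    rw [← Finset.mul_sum]
    congr 1
    set Gk : ℕ → ℝ := fun k => g (fun j => if (j : ℕ) < k then p.1 j else p.2 j) with hGk
    have hterm : ∀ i : Fin d,
        (g (fun j => if j ≤ i then p.1 j else p.2 j) -
         g (fun j => if j < i then p.1 j else p.2 j))
        = Gk ((i : ℕ) + 1) - Gk (i : ℕ) := by
      intro i
      have e1 : (fun j : Fin d => if j ≤ i then p.1 j else p.2 j) =
          (fun j : Fin d => if (j : ℕ) < (i : ℕ) + 1 then p.1 j else p.2 j) := by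
        funext j
        exact if_congr (Fin.le_def.trans Nat.lt_succ_iff.symm) rfl rfl
      have e2 : (fun j : Fin d => if j < i then p.1 j else p.2 j) =
          (fun j : Fin d => if (j : ℕ) < (i : ℕ) then p.1 j else p.2 j) := by
        funext j
        exact if_congr Fin.lt_def rfl rfl
      rw [e1, e2]
    calc (∑ i : Fin d,
          (g (fun j => if j ≤ i then p.1 j else p.2 j) -
           g (fun j => if j < i then p.1 j else p.2 j)))
        = ∑ i : Fin d, (Gk ((i : ℕ) + 1) - Gk (i : ℕ)) :=
          Finset.sum_congr rfl fun i _ => hterm i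
      _ = ∑ k ∈ Finset.range d, (Gk (k + 1) - Gk k) :=
          Fin.sum_univ_eq_sum_range (fun k => Gk (k + 1) - Gk k) d
      _ = Gk d - Gk 0 := Finset.sum_range_sub Gk d
      _ = g p.1 - g p.2 := by
          have e3 : (fun j : Fin d => if (j : ℕ) < d then p.1 j else p.2 j) = p.1 := by
            funext j
            exact if_pos j.isLt
          have e4 : (fun j : Fin d => if (j : ℕ) < 0 then p.1 j else p.2 j) = p.2 := by
            funext j
            exact if_neg (Nat.not_lt_zero _)
          simp only [hGk]
          rw [e3, e4]
  -- Step 4: evaluate the product-space integral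
  have hprod : (∫ p : (Fin d → ℝ) × (Fin d → ℝ), f p.1 * (g p.1 - g p.2)
        ∂((Measure.pi μi).prod (Measure.pi μi)))
      = (∫ x, f x * g x ∂(Measure.pi μi))
        - (∫ x, f x ∂(Measure.pi μi)) * ∫ x, g x ∂(Measure.pi μi) := by
    have hint1 : Integrable (fun p : (Fin d → ℝ) × (Fin d → ℝ) => f p.1 * g p.1)
        ((Measure.pi μi).prod (Measure.pi μi)) := memL2_integrable_mul hfF hgF
    have hint2 : Integrable (fun p : (Fin d → ℝ) × (Fin d → ℝ) => f p.1 * g p.2)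
        ((Measure.pi μi).prod (Measure.pi μi)) := memL2_integrable_mul hfF hgS
    have heq : ∀ p : (Fin d → ℝ) × (Fin d → ℝ),
        f p.1 * (g p.1 - g p.2) = f p.1 * g p.1 - f p.1 * g p.2 := fun p => by ring
    simp only [heq]
    rw [integral_sub hint1 hint2, integral_prod_mul f g]
    congr 1
    have hfst : Measure.map Prod.fst ((Measure.pi μi).prod (Measure.pi μi)) = Measure.pi μi :=
      mpFst.map_eq
    have hmeasFG : AEStronglyMeasurable (fun x => f x * g x)
        (Measure.map Prod.fst ((Measure.pi μi).prod (Measure.pi μi))) := by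
      rw [hfst]; exact (memL2_integrable_mul hfL2 hgL2).aestronglyMeasurable
    conv_rhs => rw [← hfst]
    rw [integral_map mpFst.aemeasurable hmeasFG]
  -- Step 1: covariance expansion
  have hcov : cov (Measure.pi μi) f g
      = (∫ x, f x * g x ∂(Measure.pi μi))
        - (∫ x, f x ∂(Measure.pi μi)) * ∫ x, g x ∂(Measure.pi μi) := by
    have hfi : Integrable f (Measure.pi μi) := hfL2.integrable one_le_two
    have hgi : Integrable g (Measure.pi μi) := hgL2.integrable one_le_two
    have hfgi : Integrable (fun x => f x * g x) (Measure.pi μi) :=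
      memL2_integrable_mul hfL2 hgL2
    unfold cov
    set a := ∫ y, f y ∂(Measure.pi μi) with ha
    set b := ∫ y, g y ∂(Measure.pi μi) with hb
    have heq : ∀ x, (f x - a) * (g x - b) = f x * g x - b * f x - a * g x + a * b :=
      fun x => by ring
    simp only [heq]
    have I1 : Integrable (fun x => f x * g x - b * f x) (Measure.pi μi) :=
      hfgi.sub (hfi.const_mul b)
    have I2 : Integrable (fun x => f x * g x - b * f x - a * g x) (Measure.pi μi) :=
      I1.sub (hgi.const_mul a)
    rw [integral_add I2 (integrable_const _), integral_sub I1 (hgi.const_mul a),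
      integral_sub hfgi (hfi.const_mul b), integral_const_mul, integral_const_mul,
      integral_const]
    simp only [probReal_univ, one_smul]
    rw [← ha, ← hb]
    ring
  -- assemble
  have hkeysum : (∑ i : Fin d, ∫ p : (Fin d → ℝ) × (Fin d → ℝ),
        (f p.1 - f (Function.update p.1 i (p.2 i))) *
        (g (fun j => if j ≤ i then p.1 j else p.2 j) -
         g (fun j => if j < i then p.1 j else p.2 j))
        ∂((Measure.pi μi).prod (Measure.pi μi)))
      = ∑ i : Fin d, 2 * ∫ p : (Fin d → ℝ) × (Fin d → ℝ), f p.1 *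
        (g (fun j => if j ≤ i then p.1 j else p.2 j) -
         g (fun j => if j < i then p.1 j else p.2 j))
        ∂((Measure.pi μi).prod (Measure.pi μi)) :=
    Finset.sum_congr rfl fun i _ => key i
  rw [hcov, ← hprod, ← hsum, hkeysum, ← Finset.mul_sum]
  ring
end
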